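/- arXiv:2103.06715 — 4 statements merged into one kernel-verified Lean document; each statement's English description precedes it below -/
import Mathlib

section
/- Every level is both potent and transitive (i.e. every member of a level is a subset of that level). -/
def pot (a : ZFSet) : ZFSet :=
  ZFSet.sep (fun x => ∃ c ∈ a, x ⊆ c) (ZFSet.powerset (ZFSet.sUnion a))

def Potent (a : ZFSet) : Prop := ∀ x, (∃ c, x ⊆ c ∧ c ∈ a) → x ∈ a

def IsHistory (h : ZFSet) : Prop := ∀ x ∈ h, x = pot (x ∩ h)

def IsLevel (s : ZFSet) : Prop := ∃ h, IsHistory h ∧ s = pot h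

/-!
`pot a` is downward closed under `⊆` by construction, so every level is potent. For
transitivity, a member `x` of `pot h` lies below some `c ∈ h`, and the history condition
`c = pot (c ∩ h)` places every element of `c` in `pot h`.
-/

lemma mem_pot {x a : ZFSet} : x ∈ pot a ↔ ∃ c ∈ a, x ⊆ c := by
  simp only [pot, ZFSet.mem_sep, ZFSet.mem_powerset, and_iff_right_iff_imp]
  rintro ⟨c, hc, hxc⟩ y hy
  exact ZFSet.mem_sUnion.2 ⟨c, hc, hxc hy⟩

lemma pot_mono {a b : ZFSet} (hab : a ⊆ b) : pot a ⊆ pot b := fun _ hx =>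
  let ⟨c, hc, hxc⟩ := mem_pot.1 hx
  mem_pot.2 ⟨c, hab hc, hxc⟩

lemma potent_pot (a : ZFSet) : Potent (pot a) := by
  rintro x ⟨c, hxc, hc⟩
  obtain ⟨d, hd, hcd⟩ := mem_pot.1 hc
  exact mem_pot.2 ⟨d, hd, hxc.trans hcd⟩

lemma IsHistory.subset_pot_of_mem {h c : ZFSet} (hh : IsHistory h) (hc : c ∈ h) :
    c ⊆ pot h := by
  rw [hh c hc]
  exact pot_mono fun _ hy => (ZFSet.mem_inter.1 hy).2

lemma IsHistory.subset_pot_of_mem_pot {h x : ZFSet} (hh : IsHistory h) (hx : x ∈ pot h) :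
    x ⊆ pot h :=
  let ⟨_, hc, hxc⟩ := mem_pot.1 hx
  hxc.trans (hh.subset_pot_of_mem hc)

theorem stmt2 (s : ZFSet) (hs : IsLevel s) : Potent s ∧ ∀ x ∈ s, x ⊆ s := by
  obtain ⟨h, hh, rfl⟩ := hs
  exact ⟨potent_pot h, fun _ => hh.subset_pot_of_mem_pot⟩
end

section
/- If F is a class (predicate on sets) such that some set satisfies F and every set satisfying F is potent, then there is an ∈-minimal set satisfying F: some a with F(a) such that no x with F(x) has x ∈ a. (This is proved without using Foundation, via a Russell-style set d = {x ∈ c : x ∉ x}.) -/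
namespace ZFSet

theorem sep_notMem_self_notMem (c : ZFSet) : c.sep (fun x => x ∉ x) ∉ c := by
  set d := c.sep (fun x => x ∉ x)
  intro hdc
  have hdd : d ∉ d := fun hdd => (mem_sep.1 hdd).2 hdd
  exact hdd (mem_sep.2 ⟨hdc, hdd⟩)

end ZFSet

theorem mem_of_subset_forall_of_potent {F : ZFSet → Prop} (hpot : ∀ x, F x → Potent x)
    (hmem : ∀ b, F b → ∃ x, F x ∧ x ∈ b) {d : ZFSet} (hd : ∀ b, F b → d ⊆ b) {b : ZFSet}
    (hb : F b) : d ∈ b := by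
  obtain ⟨x, hx, hxb⟩ := hmem b hb
  exact hpot b hb d ⟨x, hd x hx, hxb⟩

theorem stmt3 (F : ZFSet → Prop) (hne : ∃ x, F x) (hpot : ∀ x, F x → Potent x) :
    ∃ a, F a ∧ ∀ x, F x → x ∉ a := by
  by_contra! hmem
  obtain ⟨c, hc⟩ := hne
  set I := c.sep (fun x => ∀ b, F b → x ∈ b)
  set d := I.sep (fun x => x ∉ x)
  have hd_sub : ∀ b, F b → d ⊆ b := fun b hb _ hx =>
    (ZFSet.mem_sep.1 (ZFSet.mem_sep.1 hx).1).2 b hb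
  have hd_mem : ∀ b, F b → d ∈ b := fun b hb => mem_of_subset_forall_of_potent hpot hmem hd_sub hb
  exact I.sep_notMem_self_notMem (ZFSet.mem_sep.2 ⟨hd_mem c hc, hd_mem⟩)
end

section
/- Define the interpreted membership x ∈° a to mean (coinj(x) ∈ a ↔ ∅ ∉ a). Then interpreted Extensionality holds: for all sets a, b, if for every x, x ∈° a ↔ x ∈° b, then a = b. -/
/-! Suppose `∅ ∈ a` and `∅ ∉ b` had the same `∈°`-members. Both sets are nonempty, so
`a = coinj x` and `b = coinj y`; since `a ∉ a` and `b ∉ b`, the hypothesis at `x` and at `y`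
forces `a ∈ b` and `b ∈ a`, contradicting foundation. So `a` and `b` agree on `∅`, hence on
every `coinj x`, and since `coinj` hits every nonempty set, `a = b`. -/

inductive IsZermelo : ZFSet → Prop
  | zero : IsZermelo ∅
  | succ {n : ZFSet} : IsZermelo n → IsZermelo {n}

noncomputable def coinj (a : ZFSet) : ZFSet :=
  letI := Classical.propDecidable (IsZermelo a)
  if IsZermelo a then {a} else a

def memCo (x a : ZFSet) : Prop := coinj x ∈ a ↔ ∅ ∉ a

open ZFSet

lemma exists_coinj_eq {y : ZFSet} (hy : y ≠ ∅) : ∃ x, coinj x = y := by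
  by_cases hz : IsZermelo y
  · cases hz with
    | zero => exact absurd rfl hy
    | @succ n hn => exact ⟨n, if_pos hn⟩
  · exact ⟨y, if_neg hz⟩

lemma memCo_iff_of_empty_mem {x a : ZFSet} (ha : ∅ ∈ a) : memCo x a ↔ coinj x ∉ a := by
  simp only [memCo, ha, not_true_eq_false, iff_false]

lemma memCo_iff_of_empty_notMem {x a : ZFSet} (ha : ∅ ∉ a) : memCo x a ↔ coinj x ∈ a := by
  simp only [memCo, ha, not_false_eq_true, iff_true]

lemma empty_mem_of_memCo_iff {a b : ZFSet} (h : ∀ x, memCo x a ↔ memCo x b) (ha : ∅ ∈ a) :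
    ∅ ∈ b := by
  by_contra hb
  obtain ⟨x, rfl⟩ := exists_coinj_eq (y := a) (by rintro rfl; exact notMem_empty _ ha)
  have hab : coinj x ∈ b := by
    rw [← memCo_iff_of_empty_notMem hb, ← h, memCo_iff_of_empty_mem ha]
    exact mem_irrefl _
  obtain ⟨y, rfl⟩ := exists_coinj_eq (y := b) (by rintro rfl; exact notMem_empty _ hab)
  have hba : coinj y ∈ coinj x := by
    by_contra hba
    rw [← memCo_iff_of_empty_mem ha, h, memCo_iff_of_empty_notMem hb] at hba
    exact mem_irrefl _ hba
  exact mem_asymm hab hba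

lemma eq_of_coinj_mem_iff {a b : ZFSet} (h₀ : ∅ ∈ a ↔ ∅ ∈ b)
    (h : ∀ x, coinj x ∈ a ↔ coinj x ∈ b) : a = b := by
  ext y
  rcases eq_or_ne y ∅ with rfl | hy
  · exact h₀
  · obtain ⟨x, rfl⟩ := exists_coinj_eq hy
    exact h x

theorem stmt18 (a b : ZFSet) (h : ∀ x, memCo x a ↔ memCo x b) : a = b := by
  have h₀ : ∅ ∈ a ↔ ∅ ∈ b :=
    ⟨empty_mem_of_memCo_iff h, empty_mem_of_memCo_iff fun x => (h x).symm⟩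
  refine eq_of_coinj_mem_iff h₀ fun x => ?_
  have hx := h x
  rw [memCo, memCo, h₀] at hx
  tauto
end

section
/- Define the interpreted complement of a by cocomp(a) = a ∪ {∅} if ∅ ∉ a, and cocomp(a) = a \ {∅} if ∅ ∈ a. Then for all sets a and x: x ∈° a if and only if ¬(x ∈° cocomp(a)); moreover ¬(a ∈° a) if and only if cocomp(a) ∈° cocomp(a). -/
noncomputable def cocomp (a : ZFSet) : ZFSet :=
  letI := Classical.propDecidable ((∅ : ZFSet) ∈ a)
  if (∅ : ZFSet) ∈ a then a \ {∅} else a ∪ {∅}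

/-! `cocomp a` toggles only the membership of `∅`, while `coinj x` is never `∅`; so the
literal membership `coinj x ∈ a` is unchanged and the flag `∅ ∉ a` flips, negating `x ∈° a`.
For the self-membership clause, `coinj a ∉ a` reduces `a ∈° a` to `∅ ∈ a`. -/

theorem coinj_ne_empty (x : ZFSet) : coinj x ≠ ∅ := by
  unfold coinj
  split_ifs with hx
  · exact fun h => ZFSet.notMem_empty x (h ▸ ZFSet.mem_singleton.2 rfl)
  · rintro rfl
    exact hx IsZermelo.zero

theorem coinj_notMem_self (a : ZFSet) : coinj a ∉ a := by
  unfold coinj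
  split_ifs
  · exact fun h => ZFSet.mem_asymm h (ZFSet.mem_singleton.2 rfl)
  · exact ZFSet.mem_irrefl a

theorem empty_mem_cocomp_iff (a : ZFSet) : ∅ ∈ cocomp a ↔ ∅ ∉ a := by
  unfold cocomp
  split_ifs with ha <;> simp [ha]

theorem mem_cocomp_of_ne_empty {y : ZFSet} (hy : y ≠ ∅) (a : ZFSet) :
    y ∈ cocomp a ↔ y ∈ a := by
  unfold cocomp
  split_ifs <;> simp [hy]

theorem memCo_cocomp_iff (x a : ZFSet) : memCo x (cocomp a) ↔ ¬ memCo x a := by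
  unfold memCo
  rw [mem_cocomp_of_ne_empty (coinj_ne_empty x), empty_mem_cocomp_iff]
  tauto

theorem memCo_self_iff (a : ZFSet) : memCo a a ↔ ∅ ∈ a := by
  unfold memCo
  simp only [coinj_notMem_self, false_iff, not_not]

theorem stmt19 :
    (∀ a x : ZFSet, memCo x a ↔ ¬ memCo x (cocomp a)) ∧
    (∀ a : ZFSet, ¬ memCo a a ↔ memCo (cocomp a) (cocomp a)) := by
  refine ⟨fun a x => ?_, fun a => ?_⟩
  · rw [memCo_cocomp_iff, not_not]
  · rw [memCo_self_iff, memCo_self_iff, empty_mem_cocomp_iff]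
end
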